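/- arXiv:1708.06295 — 2 statements merged into one kernel-verified Lean document; each statement's English description precedes it below -/
import Mathlib

section
/- Let CS be a constant specification, let x and y be distinct proof variables, and let F = ⟨Tree, ⊴, Choice, R, R_e⟩ be a jstit frame for Ag that is not regular. Then there is a CS-normal jstit model M based on F and a moment-history pair (m, h) of M such that M, m, h ⊭ K(□Ex ∨ ¬□Ey) → (Ex ∨ ¬Ey). -/
/-! Preliminaries: temporal frames, stit frames, jstit frames, the language of
JA-STIT, jstit models, satisfaction, and the Hilbert system Σ_D(CS). -/

/-- A temporal frame: a nonempty set of moments with a partial order satisfying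
historical connection and no backward branching. -/
structure TemporalFrame (Mo : Type) : Type where
  le : Mo → Mo → Prop
  le_refl : ∀ m, le m m
  le_antisymm : ∀ {m m'}, le m m' → le m' m → m = m'
  le_trans : ∀ {m1 m2 m3}, le m1 m2 → le m2 m3 → le m1 m3
  nonempty : Nonempty Mo
  hist_conn : ∀ m m1, ∃ m2, le m2 m ∧ le m2 m1
  no_backward : ∀ m m1 m2, le m1 m → le m2 m → le m1 m2 ∨ le m2 m1

namespace TemporalFrame

variable {Mo : Type} (T : TemporalFrame Mo)

/-- The strict companion of the temporal order. -/
def lt (m m' : Mo) : Prop := T.le m m' ∧ m ≠ m'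

/-- A history is a maximal chain of moments w.r.t. the temporal order. -/
def IsHistory (h : Set Mo) : Prop :=
  IsChain T.le h ∧ ∀ h' : Set Mo, IsChain T.le h' → h ⊆ h' → h' = h

/-- `T.H m` is the set of histories passing through the moment `m`. -/
def H (m : Mo) : Set (Set Mo) := { h | T.IsHistory h ∧ m ∈ h }

/-- Histories `h` and `g` are undivided at `m`. -/
def Undiv (m : Mo) (h g : Set Mo) : Prop := ∃ m', T.lt m m' ∧ m' ∈ h ∧ m' ∈ g

/-- `m'` is an immediate successor of `m`. -/
def Next (m m' : Mo) : Prop := T.lt m m' ∧ ∀ m'', T.lt m'' m' → T.le m'' m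

/-- Mixed successor condition on (the temporal part of) a frame. -/
def MixSucc : Prop :=
  ∀ m m1 : Mo,
    (T.lt m m1 → ∃ m2, T.le m2 m1 ∧ T.Next m m2) ∨
    (∀ h ∈ T.H m, ∀ g ∈ T.H m, T.Undiv m h g)

end TemporalFrame

/-- A stit frame for an agent community `Ag`: a temporal frame together with a choice
function assigning to each moment and agent a partition of the histories through that
moment, subject to no choice between undivided histories and independence of agents. -/
structure StitFrame (Mo : Type) (Ag : Type) extends TemporalFrame Mo where
  choice : Mo → Ag → Set (Set (Set Mo))
  choice_cell_nonempty : ∀ m j C, C ∈ choice m j → C.Nonempty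
  choice_cell_sub : ∀ m j C, C ∈ choice m j → C ⊆ toTemporalFrame.H m
  choice_cover : ∀ m j h, h ∈ toTemporalFrame.H m → ∃ C ∈ choice m j, h ∈ C
  choice_disjoint : ∀ m j C C', C ∈ choice m j → C' ∈ choice m j →
    (C ∩ C').Nonempty → C = C'
  no_choice_undiv : ∀ m j h h', h ∈ toTemporalFrame.H m → h' ∈ toTemporalFrame.H m →
    toTemporalFrame.Undiv m h h' → ∀ C ∈ choice m j, h ∈ C → h' ∈ C
  independence : ∀ m (f : Ag → Set (Set Mo)), (∀ j, f j ∈ choice m j) →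
    (⋂ j, f j).Nonempty

/-- A justification stit (jstit) frame for `Ag`: a stit frame together with two
epistemic preorders `R ⊆ R_e`, with the temporal order included in `R`. -/
structure JstitFrame (Mo : Type) (Ag : Type) extends StitFrame Mo Ag where
  R : Mo → Mo → Prop
  Re : Mo → Mo → Prop
  R_refl : ∀ m, R m m
  R_trans : ∀ {m1 m2 m3}, R m1 m2 → R m2 m3 → R m1 m3
  Re_refl : ∀ m, Re m m
  Re_trans : ∀ {m1 m2 m3}, Re m1 m2 → Re m2 m3 → Re m1 m3
  R_sub_Re : ∀ {m m'}, R m m' → Re m m'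
  le_sub_R : ∀ {m m'}, le m m' → R m m'

namespace JstitFrame

variable {Mo : Type} {Ag : Type} (F : JstitFrame Mo Ag)

/-- The family `Θ_m` of subsets of the set of moments associated with a moment `m`. -/
def Theta (m : Mo) : Set (Set Mo) :=
  { S | m ∈ S ∧
    (∀ m1 m2, m1 ∈ S → F.Re m1 m2 → m2 ∈ S) ∧
    (∀ m1, (∀ h ∈ F.toTemporalFrame.H m1,
        ∃ m2 ∈ h, F.toTemporalFrame.Next m1 m2 ∧ m2 ∈ S) → m1 ∈ S) ∧
    (∀ m1, m1 ∈ S →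
      (∀ m2, F.toTemporalFrame.lt m2 m1 →
        ∃ m3, F.toTemporalFrame.lt m2 m3 ∧ F.toTemporalFrame.lt m3 m1) →
      ∃ m4, F.toTemporalFrame.lt m4 m1 ∧ m4 ∈ S) }

/-- A jstit frame is unirelational iff `R_e ⊆ R`. -/
def Unirelational : Prop := ∀ m m', F.Re m m' → F.R m m'

/-- Regularity of a jstit frame. -/
def Regular : Prop :=
  ∀ m m1 : Mo, F.toTemporalFrame.lt m m1 →
    (∃ S : Set Mo,
      (∀ m0, F.toTemporalFrame.lt m m0 → F.le m0 m1 → S ∈ F.Theta m0) ∧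
      m ∉ S ∧
      ∃ h' ∈ F.toTemporalFrame.H m,
        (∀ g ∈ F.toTemporalFrame.H m1, ¬ F.toTemporalFrame.Undiv m h' g) ∧
        (∀ m' ∈ h', F.toTemporalFrame.Next m m' → m' ∉ S)) →
    ∃ m2, F.le m2 m1 ∧ F.toTemporalFrame.Next m m2

end JstitFrame

/-- Proof polynomials over proof variables `PVar` and proof constants `PConst`. -/
inductive Pol (PVar PConst : Type) : Type
  | var : PVar → Pol PVar PConst
  | const : PConst → Pol PVar PConst
  | plus : Pol PVar PConst → Pol PVar PConst → Pol PVar PConst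
  | times : Pol PVar PConst → Pol PVar PConst → Pol PVar PConst
  | bang : Pol PVar PConst → Pol PVar PConst

/-- Formulas of JA-STIT. -/
inductive Form (Ag PVar PConst PropVar : Type) : Type
  | pv : PropVar → Form Ag PVar PConst PropVar
  | and : Form Ag PVar PConst PropVar → Form Ag PVar PConst PropVar →
      Form Ag PVar PConst PropVar
  | neg : Form Ag PVar PConst PropVar → Form Ag PVar PConst PropVar
  | stit : Ag → Form Ag PVar PConst PropVar → Form Ag PVar PConst PropVar
  | box : Form Ag PVar PConst PropVar → Form Ag PVar PConst PropVar
  | proves : Pol PVar PConst → Form Ag PVar PConst PropVar → Form Ag PVar PConst PropVar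
  | know : Form Ag PVar PConst PropVar → Form Ag PVar PConst PropVar
  | ann : Pol PVar PConst → Form Ag PVar PConst PropVar

namespace Form

variable {Ag PVar PConst PropVar : Type}

/-- Implication, defined as usual from `¬` and `∧`. -/
def imp (A B : Form Ag PVar PConst PropVar) : Form Ag PVar PConst PropVar :=
  neg (and A (neg B))

/-- Disjunction, defined as usual. -/
def or (A B : Form Ag PVar PConst PropVar) : Form Ag PVar PConst PropVar :=
  neg (and (neg A) (neg B))

/-- The dual `◇` of the historical necessity modality. -/
def dia (A : Form Ag PVar PConst PropVar) : Form Ag PVar PConst PropVar :=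
  neg (box (neg A))

/-- Falsum, defined as usual. -/
def bot [Inhabited PropVar] : Form Ag PVar PConst PropVar :=
  and (pv default) (neg (pv default))

end Form

/-- Conjunction of a nonempty list of formulas (head plus tail). -/
def andList {Ag PVar PConst PropVar : Type} :
    Form Ag PVar PConst PropVar → List (Form Ag PVar PConst PropVar) →
      Form Ag PVar PConst PropVar
  | A, [] => A
  | A, B :: L => Form.and A (andList B L)

/-- Disjunction of a list of formulas. -/
def bigOr {Ag PVar PConst PropVar : Type} [Inhabited PropVar] :
    List (Form Ag PVar PConst PropVar) → Form Ag PVar PConst PropVar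
  | [] => Form.bot
  | [A] => A
  | A :: B :: L => Form.or A (bigOr (B :: L))

/-- A classical propositional tautology: a formula true under every Boolean valuation
commuting with `∧` and `¬` (all other formulas being treated as atoms). -/
def Tautology {Ag PVar PConst PropVar : Type} (A : Form Ag PVar PConst PropVar) : Prop :=
  ∀ v : Form Ag PVar PConst PropVar → Bool,
    (∀ B C, v (Form.and B C) = (v B && v C)) →
    (∀ B, v (Form.neg B) = !v B) →
    v A = true

/-- The axiom schemes (A0)–(A9) of Σ_D. -/
inductive Ax {Ag PVar PConst PropVar : Type} : Form Ag PVar PConst PropVar → Prop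
  -- (A0) classical propositional tautologies
  | a0 {A} : Tautology A → Ax A
  -- (A1) S5 axioms for □
  | boxK {A B} : Ax (Form.imp (Form.box (Form.imp A B))
      (Form.imp (Form.box A) (Form.box B)))
  | boxT {A} : Ax (Form.imp (Form.box A) A)
  | box4 {A} : Ax (Form.imp (Form.box A) (Form.box (Form.box A)))
  | box5 {A} : Ax (Form.imp (Form.neg (Form.box A)) (Form.box (Form.neg (Form.box A))))
  -- (A1) S5 axioms for each [j]
  | stitK {j : Ag} {A B} : Ax (Form.imp (Form.stit j (Form.imp A B))
      (Form.imp (Form.stit j A) (Form.stit j B)))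
  | stitT {j : Ag} {A} : Ax (Form.imp (Form.stit j A) A)
  | stit4 {j : Ag} {A} : Ax (Form.imp (Form.stit j A) (Form.stit j (Form.stit j A)))
  | stit5 {j : Ag} {A} : Ax (Form.imp (Form.neg (Form.stit j A))
      (Form.stit j (Form.neg (Form.stit j A))))
  -- (A2)
  | a2 {j : Ag} {A} : Ax (Form.imp (Form.box A) (Form.stit j A))
  -- (A3), for pairwise distinct agents
  | a3 {p : Ag × Form Ag PVar PConst PropVar} {L : List (Ag × Form Ag PVar PConst PropVar)} :
      (((p :: L).map Prod.fst).Nodup) →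
      Ax (Form.imp
        (andList (Form.dia (Form.stit p.1 p.2)) (L.map fun q => Form.dia (Form.stit q.1 q.2)))
        (Form.dia (andList (Form.stit p.1 p.2) (L.map fun q => Form.stit q.1 q.2))))
  -- (A4)
  | a4 {s t : Pol PVar PConst} {A B} : Ax (Form.imp (Form.proves s (Form.imp A B))
      (Form.imp (Form.proves t A) (Form.proves (Pol.times s t) B)))
  -- (A5)
  | a5 {t : Pol PVar PConst} {A} : Ax (Form.imp (Form.proves t A)
      (Form.and (Form.proves (Pol.bang t) (Form.proves t A)) (Form.know A)))
  -- (A6)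
  | a6 {s t : Pol PVar PConst} {A} : Ax (Form.imp
      (Form.or (Form.proves s A) (Form.proves t A)) (Form.proves (Pol.plus s t) A))
  -- (A7) S4 axioms for K
  | knowK {A B} : Ax (Form.imp (Form.know (Form.imp A B))
      (Form.imp (Form.know A) (Form.know B)))
  | knowT {A} : Ax (Form.imp (Form.know A) A)
  | know4 {A} : Ax (Form.imp (Form.know A) (Form.know (Form.know A)))
  -- (A8)
  | a8 {A} : Ax (Form.imp (Form.know A) (Form.box (Form.know (Form.box A))))
  -- (A9)
  | a9 {t : Pol PVar PConst} : Ax (Form.imp (Form.box (Form.ann t))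
      (Form.know (Form.box (Form.ann t))))

/-- Iterated prefixes `c_n : … : c_1 : A` of instances `A` of the axiom schemes. -/
inductive ConstIter {Ag PVar PConst PropVar : Type} : Form Ag PVar PConst PropVar → Prop
  | base {c : PConst} {A} : Ax A → ConstIter (Form.proves (Pol.const c) A)
  | step {c : PConst} {B} : ConstIter B → ConstIter (Form.proves (Pol.const c) B)

/-- A constant specification: a set of formulas of the form `c_n : … : c_1 : A` with `A`
an instance of (A0)–(A9), closed under deleting the outermost constant. -/
def IsConstSpec {Ag PVar PConst PropVar : Type}
    (CS : Set (Form Ag PVar PConst PropVar)) : Prop :=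
  (∀ B ∈ CS, ConstIter B) ∧
  ∀ (c c' : PConst) (B : Form Ag PVar PConst PropVar),
    Form.proves (Pol.const c) (Form.proves (Pol.const c') B) ∈ CS →
    Form.proves (Pol.const c') B ∈ CS

/-- Provability in Σ_D(CS): axioms (A0)–(A9), modus ponens (R1), K-necessitation (R2),
the rule (R_D) and the rule (R_CS). -/
inductive Proves {Ag PVar PConst PropVar : Type} [Inhabited PropVar]
    (CS : Set (Form Ag PVar PConst PropVar)) : Form Ag PVar PConst PropVar → Prop
  | ax {A} : Ax A → Proves CS A
  | mp {A B} : Proves CS (Form.imp A B) → Proves CS A → Proves CS B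
  | nec {A} : Proves CS A → Proves CS (Form.know A)
  | rd {A : Form Ag PVar PConst PropVar} {ts ss : List (Pol PVar PConst)}
      (hne : ts ++ ss ≠ []) :
      Proves CS (Form.imp (Form.know A)
        (bigOr ((ts.map fun t => Form.neg (Form.box (Form.ann t))) ++
                (ss.map fun s => Form.box (Form.ann s))))) →
      Proves CS (Form.imp (Form.know A)
        (bigOr ((ts.map fun t => Form.neg (Form.ann t)) ++
                (ss.map fun s => Form.ann s))))
  | rcs {B} : B ∈ CS → Proves CS B

/-- Γ is consistent in Σ_D(CS): no finite nonempty conjunction of members of Γ provably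
implies falsum. -/
def CSConsistent {Ag PVar PConst PropVar : Type} [Inhabited PropVar]
    (CS Γ : Set (Form Ag PVar PConst PropVar)) : Prop :=
  ¬ ∃ (A : Form Ag PVar PConst PropVar) (L : List (Form Ag PVar PConst PropVar)),
      A ∈ Γ ∧ (∀ B ∈ L, B ∈ Γ) ∧ Proves CS (Form.imp (andList A L) Form.bot)

/-- A jstit model for `Ag`: a jstit frame together with `Act`, an admissible evidence
function `E` and an evaluation `V`, subject to the semantical constraints. -/
structure JstitModel (Mo : Type) (Ag PVar PConst PropVar : Type)
    extends JstitFrame Mo Ag where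
  act : Mo → Set Mo → Set (Pol PVar PConst)
  ev : Mo → Pol PVar PConst → Set (Form Ag PVar PConst PropVar)
  val : PropVar → Set (Mo × Set Mo)
  -- monotonicity of evidence
  ev_mono : ∀ m m' t, Re m m' → ev m t ⊆ ev m' t
  -- evidence closure properties
  ev_app : ∀ m s t A B, Form.imp A B ∈ ev m s → A ∈ ev m t → B ∈ ev m (Pol.times s t)
  ev_sum_left : ∀ m s t, ev m s ⊆ ev m (Pol.plus s t)
  ev_sum_right : ∀ m s t, ev m t ⊆ ev m (Pol.plus s t)
  ev_bang : ∀ m t A, A ∈ ev m t → Form.proves t A ∈ ev m (Pol.bang t)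
  -- expansion of presented proofs
  expansion : ∀ m m' h, toTemporalFrame.lt m' m → h ∈ toTemporalFrame.H m →
    act m' h ⊆ act m h
  -- no new proofs guaranteed
  no_new : ∀ m t, (∀ h ∈ toTemporalFrame.H m, t ∈ act m h) →
    ∃ m' h, toTemporalFrame.lt m' m ∧ h ∈ toTemporalFrame.H m ∧ t ∈ act m' h
  -- presenting a new proof makes histories divide
  divide : ∀ m h h', h ∈ toTemporalFrame.H m → h' ∈ toTemporalFrame.H m →
    toTemporalFrame.Undiv m h h' → act m h = act m h'
  -- presented proofs are epistemically transparent
  transparent : ∀ m m' t, Re m m' → (∀ h ∈ toTemporalFrame.H m, t ∈ act m h) →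
    ∀ h' ∈ toTemporalFrame.H m', t ∈ act m' h'

namespace JstitModel

variable {Mo Ag PVar PConst PropVar : Type}

/-- `Act_m`, the set of proofs presented at `m` under every history through `m`. -/
def ActM (M : JstitModel Mo Ag PVar PConst PropVar) (m : Mo) : Set (Pol PVar PConst) :=
  { t | ∀ h ∈ M.toTemporalFrame.H m, t ∈ M.act m h }

/-- The satisfaction relation for jstit models. -/
def Sat (M : JstitModel Mo Ag PVar PConst PropVar) :
    Form Ag PVar PConst PropVar → Mo → Set Mo → Prop
  | Form.pv p, m, h => (m, h) ∈ M.val p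
  | Form.and A B, m, h => M.Sat A m h ∧ M.Sat B m h
  | Form.neg A, m, h => ¬ M.Sat A m h
  | Form.stit j A, m, h => ∀ h' C, C ∈ M.choice m j → h ∈ C → h' ∈ C → M.Sat A m h'
  | Form.box A, m, _ => ∀ h' ∈ M.toTemporalFrame.H m, M.Sat A m h'
  | Form.know A, m, _ => ∀ m' h', M.R m m' → h' ∈ M.toTemporalFrame.H m' → M.Sat A m' h'
  | Form.proves t A, m, _ => A ∈ M.ev m t ∧
      ∀ m' h', M.Re m m' → h' ∈ M.toTemporalFrame.H m' → M.Sat A m' h'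
  | Form.ann t, m, h => t ∈ M.act m h

/-- Validity of a formula in a jstit model. -/
def Valid (M : JstitModel Mo Ag PVar PConst PropVar)
    (A : Form Ag PVar PConst PropVar) : Prop :=
  ∀ m h, h ∈ M.toTemporalFrame.H m → M.Sat A m h

end JstitModel

/-- CS-normality of a jstit model. -/
def CSNormal {Mo Ag PVar PConst PropVar : Type}
    (CS : Set (Form Ag PVar PConst PropVar))
    (M : JstitModel Mo Ag PVar PConst PropVar) : Prop :=
  ∀ (c : PConst) (m : Mo) (A : Form Ag PVar PConst PropVar),
    Form.proves (Pol.const c) A ∈ CS → A ∈ M.ev m (Pol.const c)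

/-! Non-regularity provides a critical moment `mₛ ⊲ m₁` without a successor below `m₁`, a set
`S` satisfying the closure conditions of `Θ`, containing every `m₀` with `mₛ ⊲ m₀ ⊴ m₁` but
not `mₛ`, and a history `h'` through `mₛ`, divided at `mₛ` from every history through `m₁`,
along which the successor of `mₛ` (if any) misses `S`. Take trivial evidence and let `x` be
presented at `(m, h)` when `m` or its successor along `h` lies in `S`; let `y` be presented under
the same condition, and also when `mₛ ⊴ m` and `h` is still undivided at `mₛ` from a history
through `m₁`. The closure conditions of `Θ`, together with `h'`, force every moment at which `x`
or `y` is guaranteed into `S`; this gives the constraints on `Act` and makes `□Ey → □Ex` valid.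
Along a history through `m₁`, `y` is presented at `mₛ` while `x` is not. -/

namespace TemporalFrame

variable {Mo : Type} {T : TemporalFrame Mo}

theorem IsHistory.le_or_le {h : Set Mo} (hh : T.IsHistory h) {a b : Mo} (ha : a ∈ h)
    (hb : b ∈ h) : T.le a b ∨ T.le b a := by
  rcases eq_or_ne a b with rfl | hne
  · exact Or.inl (T.le_refl a)
  · exact hh.1 ha hb hne

/-- By no backward branching, `insert b h` is still a chain. -/
theorem IsHistory.mem_of_le {h : Set Mo} (hh : T.IsHistory h) {a b : Mo} (ha : a ∈ h)
    (hba : T.le b a) : b ∈ h := by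
  have hchain : IsChain T.le (insert b h) := hh.1.insert fun c hc _ => by
    rcases hh.le_or_le hc ha with hca | hac
    · exact (T.no_backward a c b hca hba).symm
    · exact Or.inl (T.le_trans hba hac)
  rw [← hh.2 _ hchain (Set.subset_insert b h)]
  exact Set.mem_insert b h

theorem exists_mem_H (m : Mo) : ∃ h, h ∈ T.H m := by
  obtain ⟨t, ht, hmt⟩ := (Set.subsingleton_singleton (a := m)).isChain.exists_maxChain
  exact ⟨t, ⟨ht.1, fun h' hc' hsub' => (ht.2 hc' hsub').symm⟩, hmt rfl⟩

theorem lt_of_le_of_lt {a b c : Mo} (hab : T.le a b) (hbc : T.lt b c) : T.lt a c :=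
  ⟨T.le_trans hab hbc.1, by rintro rfl; exact hbc.2 (T.le_antisymm hbc.1 hab)⟩

theorem Next.eq_of_lt_of_le {m m2 n : Mo} (hnext : T.Next m m2) (hlt : T.lt m n)
    (hle : T.le n m2) : n = m2 := by
  by_contra hne
  exact hlt.2 (T.le_antisymm hlt.1 (hnext.2 n ⟨hle, hne⟩))

theorem exists_between_of_forall_not_Next {p : Mo} (hp : ∀ m, ¬ T.Next m p) {m2 : Mo}
    (hlt : T.lt m2 p) : ∃ m3, T.lt m2 m3 ∧ T.lt m3 p := by
  by_contra! hno
  refine hp m2 ⟨hlt, fun m'' hm'' => ?_⟩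
  rcases T.no_backward p m'' m2 hm''.1 hlt.1 with h1 | h1
  · exact h1
  · rcases eq_or_ne m2 m'' with rfl | hne
    · exact T.le_refl _
    · exact absurd hm'' (hno m'' ⟨h1, hne⟩)

theorem Undiv.symm {m : Mo} {h k : Set Mo} (hu : T.Undiv m h k) : T.Undiv m k h :=
  let ⟨n, hn, hnh, hnk⟩ := hu
  ⟨n, hn, hnk, hnh⟩

theorem Undiv.of_le {m m' : Mo} {h k : Set Mo} (hle : T.le m' m) (hu : T.Undiv m h k) :
    T.Undiv m' h k :=
  let ⟨n, hn, hnh, hnk⟩ := hu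
  ⟨n, lt_of_le_of_lt hle hn, hnh, hnk⟩

theorem Undiv.trans {m : Mo} {h k g : Set Mo} (hh : T.IsHistory h) (hg : T.IsHistory g)
    (hk : T.IsHistory k) (hhk : T.Undiv m h k) (hkg : T.Undiv m k g) : T.Undiv m h g := by
  obtain ⟨n1, hn1, hn1h, hn1k⟩ := hhk
  obtain ⟨n2, hn2, hn2k, hn2g⟩ := hkg
  rcases hk.le_or_le hn1k hn2k with h12 | h21
  · exact ⟨n1, hn1, hn1h, hg.mem_of_le hn2g h12⟩
  · exact ⟨n2, hn2, hh.mem_of_le hn1h h21, hn2g⟩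

end TemporalFrame

namespace JstitFrame

open TemporalFrame

variable {Mo Ag : Type} (F : JstitFrame Mo Ag)

def AtOrNextIn (S : Set Mo) (m : Mo) (h : Set Mo) : Prop :=
  m ∈ S ∨ ∃ m2 ∈ h, F.toTemporalFrame.Next m m2 ∧ m2 ∈ S

def UndivAbove (ms m1 m : Mo) (h : Set Mo) : Prop :=
  F.le ms m ∧ ∃ g ∈ F.toTemporalFrame.H m1, F.toTemporalFrame.Undiv ms h g

structure IrregularityWitness (ms m1 : Mo) (S h' : Set Mo) : Prop where
  lt : F.toTemporalFrame.lt ms m1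
  theta : ∀ m0, F.toTemporalFrame.lt ms m0 → F.le m0 m1 → S ∈ F.Theta m0
  not_mem : ms ∉ S
  mem_H : h' ∈ F.toTemporalFrame.H ms
  not_undiv : ∀ g ∈ F.toTemporalFrame.H m1, ¬ F.toTemporalFrame.Undiv ms h' g
  next_not_mem : ∀ m' ∈ h', F.toTemporalFrame.Next ms m' → m' ∉ S
  not_next : ∀ m2, F.le m2 m1 → ¬ F.toTemporalFrame.Next ms m2

variable {F}

theorem exists_irregularityWitness_of_not_regular (hF : ¬ F.Regular) :
    ∃ ms m1 S h', F.IrregularityWitness ms m1 S h' := by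
  simp only [Regular] at hF
  push Not at hF
  obtain ⟨ms, m1, hlt, ⟨S, hS, hmsS, h', hh', hdiv, hnext⟩, hnoNext⟩ := hF
  exact ⟨ms, m1, S, h', hlt, hS, hmsS, hh', hdiv, hnext, hnoNext⟩

section Theta

variable {S : Set Mo} {m : Mo}

theorem Theta.mem_of_le (hS : S ∈ F.Theta m) {a b : Mo} (ha : a ∈ S) (hab : F.le a b) :
    b ∈ S :=
  hS.2.1 a b ha (F.R_sub_Re (F.le_sub_R hab))

theorem Theta.mem_of_atOrNextIn_of_lt (hS : S ∈ F.Theta m) {m' p : Mo} {h : Set Mo}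
    (hlt : F.toTemporalFrame.lt m' p) (hh : h ∈ F.toTemporalFrame.H p)
    (hx : F.AtOrNextIn S m' h) : p ∈ S := by
  rcases hx with hm'S | ⟨m2, hm2h, hnext, hm2S⟩
  · exact Theta.mem_of_le hS hm'S hlt.1
  · rcases hh.1.le_or_le hm2h hh.2 with hm2p | hpm2
    · exact Theta.mem_of_le hS hm2S hm2p
    · rwa [hnext.eq_of_lt_of_le hlt hpm2]

theorem Theta.mem_of_forall_atOrNextIn (hS : S ∈ F.Theta m) {p : Mo}
    (hx : ∀ h ∈ F.toTemporalFrame.H p, F.AtOrNextIn S p h) : p ∈ S := by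
  by_contra hp
  exact hp (hS.2.2.1 p fun h hh => (hx h hh).resolve_left hp)

theorem Theta.exists_lt_atOrNextIn (hS : S ∈ F.Theta m) {p : Mo} (hp : p ∈ S) :
    ∃ m4 h, F.toTemporalFrame.lt m4 p ∧ h ∈ F.toTemporalFrame.H p ∧ F.AtOrNextIn S m4 h := by
  obtain ⟨h, hh⟩ := exists_mem_H (T := F.toTemporalFrame) p
  by_cases hnext : ∃ m', F.toTemporalFrame.Next m' p
  · obtain ⟨m', hm'⟩ := hnext
    exact ⟨m', h, hm'.1, hh, Or.inr ⟨p, hh.2, hm', hp⟩⟩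
  · push Not at hnext
    obtain ⟨m4, hm4, hm4S⟩ := hS.2.2.2 p hp fun _ => exists_between_of_forall_not_Next hnext
    exact ⟨m4, h, hm4, hh, Or.inl hm4S⟩

end Theta

theorem AtOrNextIn.of_undiv {S : Set Mo} {m : Mo} {h k : Set Mo}
    (hh : F.toTemporalFrame.IsHistory h) (hk : F.toTemporalFrame.IsHistory k)
    (hu : F.toTemporalFrame.Undiv m h k) (hx : F.AtOrNextIn S m h) : F.AtOrNextIn S m k := by
  rcases hx with hmS | ⟨m2, hm2h, hnext, hm2S⟩
  · exact Or.inl hmS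
  · obtain ⟨n, hn, hnh, hnk⟩ := hu
    refine Or.inr ⟨m2, ?_, hnext, hm2S⟩
    rcases hh.le_or_le hm2h hnh with hm2n | hnm2
    · exact hk.mem_of_le hnk hm2n
    · rwa [← hnext.eq_of_lt_of_le hn hnm2]

theorem UndivAbove.of_le {ms m1 m m' : Mo} {h : Set Mo} (hle : F.le m' m)
    (hd : F.UndivAbove ms m1 m' h) : F.UndivAbove ms m1 m h :=
  ⟨F.le_trans hd.1 hle, hd.2⟩

theorem UndivAbove.of_undiv {ms m1 m : Mo} {h k : Set Mo}
    (hh : F.toTemporalFrame.IsHistory h) (hk : F.toTemporalFrame.IsHistory k)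
    (hu : F.toTemporalFrame.Undiv m h k) (hd : F.UndivAbove ms m1 m h) :
    F.UndivAbove ms m1 m k :=
  let ⟨hms, g, hg, hhg⟩ := hd
  ⟨hms, g, hg, (hu.of_le hms).symm.trans hk hg.1 hh hhg⟩

section Act

variable {PVar PConst : Type}

variable (F) in
def witnessAct (S : Set Mo) (ms m1 : Mo) (x y : PVar) (m : Mo) (h : Set Mo) :
    Set (Pol PVar PConst) :=
  {t | t = Pol.var x ∧ F.AtOrNextIn S m h ∨
    t = Pol.var y ∧ (F.AtOrNextIn S m h ∨ F.UndivAbove ms m1 m h)}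

variable {S : Set Mo} {ms m1 : Mo} {x y : PVar} {m m' : Mo} {h h'' : Set Mo}
  {t : Pol PVar PConst}

theorem witnessAct_subset (hX : F.AtOrNextIn S m h → F.AtOrNextIn S m' h'')
    (hD : F.UndivAbove ms m1 m h → F.UndivAbove ms m1 m' h'') :
    (F.witnessAct S ms m1 x y m h : Set (Pol PVar PConst)) ⊆ F.witnessAct S ms m1 x y m' h'' := by
  rintro t (⟨rfl, hx⟩ | ⟨rfl, hxd⟩)
  · exact Or.inl ⟨rfl, hX hx⟩
  · exact Or.inr ⟨rfl, hxd.imp hX hD⟩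

theorem mem_witnessAct_of_atOrNextIn (ht : t ∈ F.witnessAct S ms m1 x y m h)
    (hX : F.AtOrNextIn S m' h'') : t ∈ F.witnessAct S ms m1 x y m' h'' := by
  rcases ht with ⟨rfl, -⟩ | ⟨rfl, -⟩
  · exact Or.inl ⟨rfl, hX⟩
  · exact Or.inr ⟨rfl, Or.inl hX⟩

theorem atOrNextIn_or_undivAbove_of_mem_witnessAct (ht : t ∈ F.witnessAct S ms m1 x y m h) :
    F.AtOrNextIn S m h ∨ F.UndivAbove ms m1 m h := by
  rcases ht with ⟨-, hx⟩ | ⟨-, hxd⟩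
  · exact Or.inl hx
  · exact hxd

end Act

namespace IrregularityWitness

variable {ms m1 : Mo} {S h' : Set Mo}

theorem theta_m1 (w : F.IrregularityWitness ms m1 S h') : S ∈ F.Theta m1 :=
  w.theta m1 w.lt (F.le_refl m1)

theorem mem_of_lt_of_mem (w : F.IrregularityWitness ms m1 S h') {q : Mo}
    (hq : F.toTemporalFrame.lt ms q) {g : Set Mo}
    (hg : g ∈ F.toTemporalFrame.H m1) (hqg : q ∈ g) : q ∈ S := by
  rcases hg.1.le_or_le hqg hg.2 with hqm1 | hm1q
  · exact (w.theta q hq hqm1).1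
  · exact Theta.mem_of_le w.theta_m1 w.theta_m1.1 hm1q

theorem not_atOrNextIn_of_mem_H (w : F.IrregularityWitness ms m1 S h') {g : Set Mo}
    (hg : g ∈ F.toTemporalFrame.H m1) :
    ¬ F.AtOrNextIn S ms g := by
  rintro (hmsS | ⟨m2, hm2g, hnext, -⟩)
  · exact w.not_mem hmsS
  · rcases hg.1.le_or_le hm2g hg.2 with hm2m1 | hm1m2
    · exact w.not_next m2 hm2m1 hnext
    · rw [← hnext.eq_of_lt_of_le w.lt hm1m2] at hnext
      exact w.not_next m1 (F.le_refl m1) hnext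

theorem undivAbove_of_mem_H (w : F.IrregularityWitness ms m1 S h') {g : Set Mo}
    (hg : g ∈ F.toTemporalFrame.H m1) :
    F.UndivAbove ms m1 ms g :=
  ⟨F.le_refl ms, g, hg, m1, w.lt, hg.2, hg.2⟩

theorem mem_of_forall_atOrNextIn_or_undivAbove (w : F.IrregularityWitness ms m1 S h') {p : Mo}
    (hp : ∀ h ∈ F.toTemporalFrame.H p, F.AtOrNextIn S p h ∨ F.UndivAbove ms m1 p h) :
    p ∈ S := by
  by_cases hall : ∀ h ∈ F.toTemporalFrame.H p, F.AtOrNextIn S p h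
  · exact Theta.mem_of_forall_atOrNextIn w.theta_m1 hall
  push Not at hall
  obtain ⟨h0, hh0, hnx⟩ := hall
  obtain ⟨hms, g, hg, n, hn, hnh0, hng⟩ := (hp h0 hh0).resolve_left hnx
  have hmsp : ms ≠ p := by
    rintro rfl
    rcases hp h' w.mem_H with (hmsS | ⟨m2, hm2, hnext, hm2S⟩) | ⟨-, g', hg', hu⟩
    · exact w.not_mem hmsS
    · exact w.next_not_mem m2 hm2 hnext hm2S
    · exact w.not_undiv g' hg' hu
  rcases hh0.1.le_or_le hh0.2 hnh0 with hpn | hnp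
  · exact w.mem_of_lt_of_mem ⟨hms, hmsp⟩ hg (hg.1.mem_of_le hng hpn)
  · exact Theta.mem_of_le w.theta_m1 (w.mem_of_lt_of_mem hn hg hng) hnp

variable {PVar PConst : Type}

theorem mem_of_forall_mem_witnessAct (w : F.IrregularityWitness ms m1 S h') {x y : PVar}
    {p : Mo} {t : Pol PVar PConst}
    (ht : ∀ h ∈ F.toTemporalFrame.H p, t ∈ F.witnessAct S ms m1 x y p h) : p ∈ S :=
  w.mem_of_forall_atOrNextIn_or_undivAbove fun h hh =>
    atOrNextIn_or_undivAbove_of_mem_witnessAct (ht h hh)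

variable {PropVar : Type}

def model (w : F.IrregularityWitness ms m1 S h') (x y : PVar) :
    JstitModel Mo Ag PVar PConst PropVar where
  toJstitFrame := F
  act := F.witnessAct S ms m1 x y
  ev _ _ := Set.univ
  val _ := ∅
  ev_mono _ _ _ _ := subset_rfl
  ev_app _ _ _ _ _ _ _ := Set.mem_univ _
  ev_sum_left _ _ _ := subset_rfl
  ev_sum_right _ _ _ := subset_rfl
  ev_bang _ _ _ _ := Set.mem_univ _
  expansion _ _ _ hlt hh :=
    witnessAct_subset (fun hx => Or.inl (Theta.mem_of_atOrNextIn_of_lt w.theta_m1 hlt hh hx))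
      (UndivAbove.of_le hlt.1)
  no_new m _ ht := by
    obtain ⟨m4, h, hlt, hh, hx⟩ :=
      Theta.exists_lt_atOrNextIn w.theta_m1 (w.mem_of_forall_mem_witnessAct ht)
    obtain ⟨h0, hh0⟩ := exists_mem_H (T := F.toTemporalFrame) m
    exact ⟨m4, h, hlt, hh, mem_witnessAct_of_atOrNextIn (ht h0 hh0) hx⟩
  divide _ _ _ hh hk hu :=
    (witnessAct_subset (AtOrNextIn.of_undiv hh.1 hk.1 hu)
      (UndivAbove.of_undiv hh.1 hk.1 hu)).antisymm
    (witnessAct_subset (AtOrNextIn.of_undiv hk.1 hh.1 hu.symm)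
      (UndivAbove.of_undiv hk.1 hh.1 hu.symm))
  transparent m _ _ hre ht _ _ := by
    obtain ⟨h0, hh0⟩ := exists_mem_H (T := F.toTemporalFrame) m
    exact mem_witnessAct_of_atOrNextIn (ht h0 hh0)
      (Or.inl (w.theta_m1.2.1 _ _ (w.mem_of_forall_mem_witnessAct ht) hre))

theorem model_sat_box_or_not_box (w : F.IrregularityWitness ms m1 S h') (x y : PVar) (p : Mo)
    (h : Set Mo) :
    (w.model x y : JstitModel Mo Ag PVar PConst PropVar).Sat
      (Form.or (Form.box (Form.ann (Pol.var x))) (Form.neg (Form.box (Form.ann (Pol.var y)))))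
      p h := by
  simp only [Form.or, JstitModel.Sat, not_not]
  rintro ⟨hnx, hy⟩
  exact hnx fun _ _ => Or.inl ⟨rfl, Or.inl (w.mem_of_forall_mem_witnessAct hy)⟩

end IrregularityWitness

end JstitFrame

theorem stmt15_general {Mo Ag PVar PConst PropVar : Type}
    (CS : Set (Form Ag PVar PConst PropVar))
    (x y : PVar) (hxy : x ≠ y)
    (F : JstitFrame Mo Ag) (hF : ¬ F.Regular) :
    ∃ M : JstitModel Mo Ag PVar PConst PropVar,
      M.toJstitFrame = F ∧ CSNormal CS M ∧
      ∃ m h, h ∈ M.toTemporalFrame.H m ∧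
        ¬ M.Sat (Form.imp
            (Form.know (Form.or (Form.box (Form.ann (Pol.var x)))
              (Form.neg (Form.box (Form.ann (Pol.var y))))))
            (Form.or (Form.ann (Pol.var x)) (Form.neg (Form.ann (Pol.var y))))) m h := by
  obtain ⟨ms, m1, S, h', w⟩ := JstitFrame.exists_irregularityWitness_of_not_regular hF
  obtain ⟨g, hg⟩ := TemporalFrame.exists_mem_H (T := F.toTemporalFrame) m1
  refine ⟨w.model x y, rfl, fun _ _ _ _ => Set.mem_univ _, ms, g,
    ⟨hg.1, hg.1.mem_of_le hg.2 w.lt.1⟩, ?_⟩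
  simp only [Form.imp, JstitModel.Sat, not_not]
  refine ⟨fun p _ _ _ => w.model_sat_box_or_not_box x y p _, ?_⟩
  simp only [Form.or, JstitModel.Sat, not_not]
  refine ⟨?_, Or.inr ⟨rfl, Or.inr (w.undivAbove_of_mem_H hg)⟩⟩
  rintro (⟨-, hx⟩ | ⟨hxy', -⟩)
  · exact w.not_atOrNextIn_of_mem_H hg hx
  · exact hxy (Pol.var.inj hxy')

/-- Lemma 6: every non-regular jstit frame carries a CS-normal jstit
model falsifying `K(□Ex ∨ ¬□Ey) → (Ex ∨ ¬Ey)` at some moment-history pair. -/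
theorem stmt15 {Mo Ag PVar PConst PropVar : Type} [Finite Ag]
    [Countable PVar] [Infinite PVar] [Countable PConst] [Infinite PConst]
    [Countable PropVar] [Infinite PropVar] [Inhabited PropVar]
    (CS : Set (Form Ag PVar PConst PropVar)) (hCS : IsConstSpec CS)
    (x y : PVar) (hxy : x ≠ y)
    (F : JstitFrame Mo Ag) (hF : ¬ F.Regular) :
    ∃ M : JstitModel Mo Ag PVar PConst PropVar,
      M.toJstitFrame = F ∧ CSNormal CS M ∧
      ∃ m h, h ∈ M.toTemporalFrame.H m ∧
        ¬ M.Sat (Form.imp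
            (Form.know (Form.or (Form.box (Form.ann (Pol.var x)))
              (Form.neg (Form.box (Form.ann (Pol.var y))))))
            (Form.or (Form.ann (Pol.var x)) (Form.neg (Form.ann (Pol.var y))))) m h :=
  stmt15_general CS x y hxy F hF
end

section
/- Let M be a jstit model for Ag, let m, m1 ∈ Tree with m ⊲ m1, let h ∈ H_{m1}, and let t1, …, tn ∈ Pol with {t1, …, tn} ⊆ Act(m, h). Put S = {m'' ∈ Tree : {t1, …, tn} ⊆ Act_{m''}}. Then S ∈ Θ_{m'} for every m' ∈ Tree with m ⊲ m' ⊴ m1. -/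
/-!
Along a history, `Act` can only grow (expansion of presented proofs), and at a moment `m` all
histories through a common later moment present the same proofs (presenting a new proof makes
histories divide); together these turn `t ∈ Act(m, h)` with `h` through a strictly later `m'`
into `t ∈ Act_{m'}`. Closure under `R_e` is epistemic transparency. For the successor and density
clauses, "no new proofs guaranteed" locates each `t ∈ Act_{m₁}` at a strictly earlier moment;
by no backward branching the moments below `m₁` form a chain, so finitely many such witnesses
have a common upper bound below `m₁`.
-/

namespace TemporalFrame

variable {Mo : Type} {T : TemporalFrame Mo}

theorem IsHistory.mem_of_le_s18 {h : Set Mo} (hh : T.IsHistory h) {x y : Mo} (hx : x ∈ h)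
    (hyx : T.le y x) : y ∈ h := by
  have hchain : IsChain T.le (insert y h) := by
    refine hh.1.insert fun b hb hyb => ?_
    rcases eq_or_ne b x with rfl | hbx
    · exact Or.inl hyx
    · rcases hh.1 hb hx hbx with hbx | hxb
      · exact T.no_backward x y b hyx hbx
      · exact Or.inl (T.le_trans hyx hxb)
  rw [← hh.2 _ hchain (Set.subset_insert y h)]
  exact Set.mem_insert y h

theorem mem_H_of_le {h : Set Mo} {x y : Mo} (hh : h ∈ T.H x) (hyx : T.le y x) : h ∈ T.H y :=
  ⟨hh.1, hh.1.mem_of_le_s18 hh.2 hyx⟩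

theorem exists_lt_forall_of_forall_exists_lt {α : Type} {m : Mo} (P : α → Mo → Prop)
    (hP : ∀ a x y, P a x → T.le x y → T.lt y m → P a y) {l : List α} (hl : l ≠ [])
    (hex : ∀ a ∈ l, ∃ x, T.lt x m ∧ P a x) : ∃ x, T.lt x m ∧ ∀ a ∈ l, P a x := by
  induction l with
  | nil => exact absurd rfl hl
  | cons a l ih =>
    obtain ⟨x, hxm, hax⟩ := hex a List.mem_cons_self
    rcases eq_or_ne l [] with rfl | hl'
    · exact ⟨x, hxm, by simpa using hax⟩
    obtain ⟨y, hym, hly⟩ := ih hl' fun b hb => hex b (List.mem_cons_of_mem a hb)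
    rcases T.no_backward m x y hxm.1 hym.1 with hxy | hyx
    · exact ⟨y, hym, List.forall_mem_cons.2 ⟨hP a x y hax hxy hym, hly⟩⟩
    · exact ⟨x, hxm, List.forall_mem_cons.2 ⟨hax, fun b hb => hP b y x (hly b hb) hyx hxm⟩⟩

end TemporalFrame

namespace JstitModel

variable {Mo Ag PVar PConst PropVar : Type} (M : JstitModel Mo Ag PVar PConst PropVar)

theorem act_subset_act_of_le {x y : Mo} {h : Set Mo} (hxy : M.le x y)
    (hh : h ∈ M.toTemporalFrame.H y) : M.act x h ⊆ M.act y h := by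
  rcases eq_or_ne x y with rfl | hne
  · exact subset_rfl
  · exact M.expansion y x h ⟨hxy, hne⟩ hh

theorem act_eq_of_lt {x y : Mo} {h g : Set Mo} (hxy : M.toTemporalFrame.lt x y)
    (hh : h ∈ M.toTemporalFrame.H y) (hg : g ∈ M.toTemporalFrame.H y) : M.act x h = M.act x g :=
  M.divide x h g (TemporalFrame.mem_H_of_le hh hxy.1) (TemporalFrame.mem_H_of_le hg hxy.1)
    ⟨y, hxy, hh.2, hg.2⟩

theorem mem_ActM_of_lt {x y : Mo} {h : Set Mo} {t : Pol PVar PConst}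
    (hxy : M.toTemporalFrame.lt x y) (hh : h ∈ M.toTemporalFrame.H y) (ht : t ∈ M.act x h) :
    t ∈ M.ActM y := fun g hg =>
  M.expansion y x g hxy hg (M.act_eq_of_lt hxy hh hg ▸ ht)

theorem ActM_subset_of_Re {x y : Mo} (hxy : M.Re x y) : M.ActM x ⊆ M.ActM y :=
  fun t ht => M.transparent x y t hxy ht

theorem mem_act_of_next_of_mem_ActM {x y : Mo} {g : Set Mo} {t : Pol PVar PConst}
    (hxy : M.toTemporalFrame.Next x y) (hg : g ∈ M.toTemporalFrame.H x) (hyg : y ∈ g)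
    (ht : t ∈ M.ActM y) : t ∈ M.act x g := by
  obtain ⟨z, h, hzy, hh, htz⟩ := M.no_new y t ht
  have htx : t ∈ M.act x h :=
    M.act_subset_act_of_le (hxy.2 z hzy) (TemporalFrame.mem_H_of_le hh hxy.1.1) htz
  exact M.act_eq_of_lt hxy.1 hh ⟨hg.1, hyg⟩ ▸ htx

theorem exists_lt_forall_mem_act {x : Mo} {ts : List (Pol PVar PConst)} (hne : ts ≠ [])
    (hts : ∀ t ∈ ts, t ∈ M.ActM x) :
    ∃ z, M.toTemporalFrame.lt z x ∧ ∀ t ∈ ts, ∃ h ∈ M.toTemporalFrame.H x, t ∈ M.act z h := by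
  refine TemporalFrame.exists_lt_forall_of_forall_exists_lt _ ?_ hne fun t ht => ?_
  · rintro t z w ⟨h, hh, htz⟩ hzw hwx
    exact ⟨h, hh, M.act_subset_act_of_le hzw (TemporalFrame.mem_H_of_le hh hwx.1) htz⟩
  · obtain ⟨z, h, hzx, hh, htz⟩ := M.no_new x t (hts t ht)
    exact ⟨z, hzx, h, hh, htz⟩

theorem exists_lt_forall_mem_ActM_of_dense {x : Mo} {ts : List (Pol PVar PConst)}
    (hne : ts ≠ []) (hts : ∀ t ∈ ts, t ∈ M.ActM x)
    (hdense : ∀ y, M.toTemporalFrame.lt y x →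
      ∃ z, M.toTemporalFrame.lt y z ∧ M.toTemporalFrame.lt z x) :
    ∃ z, M.toTemporalFrame.lt z x ∧ ∀ t ∈ ts, t ∈ M.ActM z := by
  obtain ⟨y, hyx, hy⟩ := M.exists_lt_forall_mem_act hne hts
  obtain ⟨z, hyz, hzx⟩ := hdense y hyx
  refine ⟨z, hzx, fun t ht => ?_⟩
  obtain ⟨h, hh, hty⟩ := hy t ht
  exact M.mem_ActM_of_lt hyz (TemporalFrame.mem_H_of_le hh hzx.1) hty

end JstitModel

theorem stmt18_general {Mo Ag PVar PConst PropVar : Type}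
    (M : JstitModel Mo Ag PVar PConst PropVar)
    (m m1 : Mo) (h : Set Mo) (ts : List (Pol PVar PConst)) (hne : ts ≠ [])
    (hh : h ∈ M.toTemporalFrame.H m1)
    (hts : ∀ t ∈ ts, t ∈ M.act m h) :
    ∀ m' : Mo, M.toTemporalFrame.lt m m' → M.le m' m1 →
      { m'' : Mo | ∀ t ∈ ts, t ∈ M.ActM m'' } ∈ M.toJstitFrame.Theta m' := by
  intro m' hmm' hm'm1
  refine ⟨fun t ht => M.mem_ActM_of_lt hmm' (TemporalFrame.mem_H_of_le hh hm'm1) (hts t ht),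
    fun x y hx hxy t ht => M.ActM_subset_of_Re hxy (hx t ht),
    fun x hnext t ht g hg => ?_,
    fun x hx hdense => M.exists_lt_forall_mem_ActM_of_dense hne hx hdense⟩
  obtain ⟨y, hyg, hxy, hy⟩ := hnext g hg
  exact M.mem_act_of_next_of_mem_ActM hxy hg hyg (hy t ht)

/-- Claim 2 in Theorem 5: if `m ⊲ m1`, `h ∈ H_{m1}` and
`t1,…,tn ∈ Act(m,h)`, then `S = {m'' : t1,…,tn ∈ Act_{m''}}` belongs to `Θ_{m'}`
for every `m'` with `m ⊲ m' ⊴ m1`. -/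
theorem stmt18 {Mo Ag PVar PConst PropVar : Type} [Finite Ag]
    [Countable PVar] [Infinite PVar] [Countable PConst] [Infinite PConst]
    [Countable PropVar] [Infinite PropVar]
    (M : JstitModel Mo Ag PVar PConst PropVar)
    (m m1 : Mo) (h : Set Mo) (ts : List (Pol PVar PConst)) (hne : ts ≠ [])
    (hlt : M.toTemporalFrame.lt m m1) (hh : h ∈ M.toTemporalFrame.H m1)
    (hts : ∀ t ∈ ts, t ∈ M.act m h) :
    ∀ m' : Mo, M.toTemporalFrame.lt m m' → M.le m' m1 →
      { m'' : Mo | ∀ t ∈ ts, t ∈ M.ActM m'' } ∈ M.toJstitFrame.Theta m' :=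
  stmt18_general M m m1 h ts hne hh hts
end
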